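/- The Minimax MB voting method satisfies immunity to spoilers on three-alternative profiles with no zero margins between distinct alternatives: for any profile P with |X(P)| = 3 such that Margin_P(x,y) ≠ 0 for all distinct x,y ∈ X(P), and any a,b ∈ X(P), if a ∈ MinimaxMB(P_{-b}) and MinimaxMB(P|{a,b}) = {a}, then a ∈ MinimaxMB(P). -/

import Mathlib

/-!
Formalization of notions from "An extension of May's Theorem to three
alternatives: axiomatizing Minimax voting" by Holliday and Pacuit.

The set of voters is the countably infinite set `ℕ`; the set `α` of
alternatives is a type (assumed to have at least three elements where the
paper assumes `|𝒳| ≥ 3`).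
-/

namespace MayMinimax

/-- A profile: a finite set of voters drawn from the countably infinite set `ℕ`
of all voters, a finite set of alternatives, and, for each voter, a binary
relation on alternatives given as a Boolean-valued function:
`P.rel i a b = true` means that voter `i` ranks `a` above `b`. -/
structure Profile (α : Type*) where
  voters : Finset ℕ
  alts : Finset α
  rel : ℕ → α → α → Bool

variable {α : Type*} [DecidableEq α]

/-- Each voter's ballot is a strict weak order (asymmetric and negatively
transitive) on the alternatives. -/
def IsSWO (P : Profile α) : Prop :=
  ∀ i ∈ P.voters,
    (∀ a ∈ P.alts, ∀ b ∈ P.alts, P.rel i a b = true → P.rel i b a = false) ∧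
    (∀ a ∈ P.alts, ∀ b ∈ P.alts, ∀ c ∈ P.alts,
      P.rel i a b = false → P.rel i b c = false → P.rel i a c = false)

/-- The margin of `a` over `b` in `P`: the number of voters ranking `a` above
`b` minus the number of voters ranking `b` above `a`. -/
def Margin (P : Profile α) (a b : α) : ℤ :=
  ((P.voters.filter fun i => P.rel i a b = true).card : ℤ) -
    ((P.voters.filter fun i => P.rel i b a = true).card : ℤ)

/-- The number of voters ranking `a` above `b` in `P`. -/
def Support (P : Profile α) (a b : α) : ℕ :=
  (P.voters.filter fun i => P.rel i a b = true).card

/-- The Minimax score of `a`: the maximum margin of any other alternative over `a`. -/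
def MMScore (P : Profile α) (a : α) : ℤ :=
  WithBot.unbotD 0 (((P.alts.erase a).image fun b => Margin P b a).max)

/-- The set of Minimax winners: alternatives with minimal Minimax score. -/
def Minimax (P : Profile α) : Finset α :=
  P.alts.filter fun a => ∀ b ∈ P.alts, MMScore P a ≤ MMScore P b

/-- Restriction of a profile to a subset `Y` of the alternatives. -/
def Profile.restrict (P : Profile α) (Y : Finset α) : Profile α where
  voters := P.voters
  alts := Y
  rel := fun i a b => P.rel i a b && decide (a ∈ Y) && decide (b ∈ Y)

/-- `P.minus b` is `P` restricted to `X(P) \ {b}`. -/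
def Profile.minus (P : Profile α) (b : α) : Profile α :=
  P.restrict (P.alts.erase b)

/-- The combination `P + Q` of two profiles (used with disjoint voter sets and
the same set of alternatives). -/
def Profile.combine (P Q : Profile α) : Profile α where
  voters := P.voters ∪ Q.voters
  alts := P.alts
  rel := fun i a b => if i ∈ P.voters then P.rel i a b else Q.rel i a b

/-- `2P`: the profile `P` together with a copy of `P` on a disjoint set of voters. -/
def Profile.double (P : Profile α) : Profile α where
  voters := P.voters ∪ P.voters.image fun i => i + (P.voters.sup id + 1)
  alts := P.alts
  rel := fun i a b =>
    if i ∈ P.voters then P.rel i a b else P.rel (i - (P.voters.sup id + 1)) a b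

/-- `r` is (the strict part of) a linear order on the finite set `X`. -/
def IsLinearOn (r : α → α → Bool) (X : Finset α) : Prop :=
  (∀ a ∈ X, r a a = false) ∧
  (∀ a ∈ X, ∀ b ∈ X, ∀ c ∈ X, r a b = true → r b c = true → r a c = true) ∧
  (∀ a ∈ X, ∀ b ∈ X, a ≠ b → (r a b = true ∨ r b a = true)) ∧
  (∀ a ∈ X, ∀ b ∈ X, r a b = true → r b a = false)

/-- `Q` is a block profile for the set `X` of alternatives: it contains, for
each linear order of `X`, exactly one voter submitting that linear order, and
no other voters. -/
def IsBlock (X : Finset α) (Q : Profile α) : Prop :=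
  Q.alts = X ∧
  (∀ i ∈ Q.voters, IsLinearOn (Q.rel i) X) ∧
  (∀ r : α → α → Bool, IsLinearOn r X →
    ∃! i, i ∈ Q.voters ∧ ∀ a ∈ X, ∀ b ∈ X, Q.rel i a b = r a b)

/-- `P'` is obtained from `P` by one voter who ranked `a` uniquely last in `P`
switching to ranking `a` uniquely first in `P'`, with the restriction of that
voter's relation to `X(P) \ {a}` unchanged and all other voters' relations
unchanged. -/
def MoveLastToFirst (P P' : Profile α) (a : α) : Prop :=
  P'.voters = P.voters ∧ P'.alts = P.alts ∧ a ∈ P.alts ∧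
  ∃ i ∈ P.voters,
    (∀ b ∈ P.alts, b ≠ a → P.rel i b a = true) ∧
    (∀ b ∈ P.alts, b ≠ a → P'.rel i a b = true) ∧
    (∀ b ∈ P.alts, b ≠ a → ∀ c ∈ P.alts, c ≠ a → P'.rel i b c = P.rel i b c) ∧
    (∀ j ∈ P.voters, j ≠ i → ∀ x ∈ P.alts, ∀ y ∈ P.alts, P'.rel j x y = P.rel j x y)

/-- `P'` is obtained from `P` by adding one new voter who ranks `a` uniquely
first, all old voters' relations being unchanged. -/
def AddTopVoter (P P' : Profile α) (a : α) : Prop :=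
  P'.alts = P.alts ∧
  ∃ j, j ∉ P.voters ∧ P'.voters = insert j P.voters ∧
    (∀ b ∈ P.alts, b ≠ a → P'.rel j a b = true) ∧
    (∀ i ∈ P.voters, ∀ x ∈ P.alts, ∀ y ∈ P.alts, P'.rel i x y = P.rel i x y)

/-- `P'` is obtained from `P` by one voter improving the position of `a` in
their ballot, while nothing else changes. -/
def ImproveFor (P P' : Profile α) (a : α) : Prop :=
  P'.voters = P.voters ∧ P'.alts = P.alts ∧
  ∃ i ∈ P.voters,
    (∃ b ∈ P.alts, b ≠ a ∧
      ((P.rel i a b = false ∧ P'.rel i a b = true) ∨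
        (P.rel i b a = true ∧ P'.rel i b a = false))) ∧
    (∀ c ∈ P.alts, c ≠ a →
      (P.rel i a c = true → P'.rel i a c = true) ∧
      (P.rel i c a = false → P'.rel i c a = false)) ∧
    (∀ c ∈ P.alts, c ≠ a → ∀ d ∈ P.alts, d ≠ a → P'.rel i c d = P.rel i c d) ∧
    (∀ j ∈ P.voters, j ≠ i → ∀ x ∈ P.alts, ∀ y ∈ P.alts, P'.rel j x y = P.rel j x y)

/-- Anonymity relative to a domain `D` of profiles. -/
def Anonymity (D : Set (Profile α)) (F : Profile α → Finset α) : Prop :=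
  ∀ P ∈ D, ∀ P' ∈ D, P.alts = P'.alts →
    (∃ π : Equiv.Perm ℕ, P.voters.image π = P'.voters ∧
      ∀ i ∈ P.voters, ∀ a ∈ P.alts, ∀ b ∈ P.alts, P.rel i a b = P'.rel (π i) a b) →
    F P = F P'

/-- Neutrality relative to a domain `D` of profiles. -/
def Neutrality (D : Set (Profile α)) (F : Profile α → Finset α) : Prop :=
  ∀ P ∈ D, ∀ P' ∈ D, P.voters = P'.voters →
    ∀ τ : Equiv.Perm α, P.alts.image τ = P'.alts →
      (∀ i ∈ P.voters, ∀ a ∈ P.alts, ∀ b ∈ P.alts, P.rel i a b = P'.rel i (τ a) (τ b)) →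
      (F P).image τ = F P'

/-- Weak positive responsiveness relative to a domain `D` of profiles. -/
def WeakPositiveResponsiveness (D : Set (Profile α)) (F : Profile α → Finset α) : Prop :=
  ∀ P ∈ D, ∀ P' ∈ D, ∀ a ∈ F P, MoveLastToFirst P P' a → F P' = {a}

/-- (Full) positive responsiveness relative to a domain `D` of profiles. -/
def PositiveResponsiveness (D : Set (Profile α)) (F : Profile α → Finset α) : Prop :=
  ∀ P ∈ D, ∀ P' ∈ D, ∀ a ∈ F P, ImproveFor P P' a → F P' = {a}

/-- Positive involvement relative to a domain `D` of profiles. -/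
def PositiveInvolvement (D : Set (Profile α)) (F : Profile α → Finset α) : Prop :=
  ∀ P ∈ D, ∀ P' ∈ D, ∀ a ∈ F P, AddTopVoter P P' a → a ∈ F P'

/-- Near immunity to spoilers relative to a domain `D` of profiles. -/
def NearImmunityToSpoilers (D : Set (Profile α)) (F : Profile α → Finset α) : Prop :=
  ∀ P ∈ D, ∀ a ∈ P.alts, ∀ b ∈ P.alts,
    P.minus b ∈ D → P.restrict {a, b} ∈ D →
    F (P.minus b) = {a} → F (P.restrict {a, b}) = {a} → b ∉ F P → a ∈ F P

/-- Immunity to spoilers relative to a domain `D` of profiles. -/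
def ImmunityToSpoilers (D : Set (Profile α)) (F : Profile α → Finset α) : Prop :=
  ∀ P ∈ D, ∀ a ∈ P.alts, ∀ b ∈ P.alts,
    P.minus b ∈ D → P.restrict {a, b} ∈ D →
    a ∈ F (P.minus b) → F (P.restrict {a, b}) = {a} → b ∉ F P → a ∈ F P

/-- (Inclusion) homogeneity relative to a domain `D` of profiles. -/
def Homogeneity (D : Set (Profile α)) (F : Profile α → Finset α) : Prop :=
  ∀ P ∈ D, P.double ∈ D ∧ F P ⊆ F P.double

/-- Block preservation relative to a domain `D` of profiles. -/
def BlockPreservation (D : Set (Profile α)) (F : Profile α → Finset α) : Prop :=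
  ∀ P ∈ D, ∀ Q ∈ D, Disjoint P.voters Q.voters → IsBlock P.alts Q →
    P.combine Q ∈ D ∧ F P ⊆ F (P.combine Q)

/-- Condorcet consistency relative to a domain `D` of profiles. -/
def CondorcetConsistent (D : Set (Profile α)) (F : Profile α → Finset α) : Prop :=
  ∀ P ∈ D, ∀ c ∈ P.alts, (∀ x ∈ P.alts, x ≠ c → 0 < Margin P c x) → F P = {c}

/-- The domain of all (strict-weak-order) profiles with exactly two alternatives. -/
def Dom2 (α : Type*) : Set (Profile α) :=
  {P | IsSWO P ∧ P.voters.Nonempty ∧ P.alts.card = 2}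

/-- The domain of all profiles with two or three alternatives. -/
def Dom23 (α : Type*) : Set (Profile α) :=
  {P | IsSWO P ∧ P.voters.Nonempty ∧ (P.alts.card = 2 ∨ P.alts.card = 3)}

/-- The domain of all profiles with at least two alternatives. -/
def DomGe2 (α : Type*) : Set (Profile α) :=
  {P | IsSWO P ∧ P.voters.Nonempty ∧ 2 ≤ P.alts.card}

/-- The domain of all profiles. -/
def DomAll (α : Type*) : Set (Profile α) :=
  {P | IsSWO P ∧ P.voters.Nonempty ∧ P.alts.Nonempty}

/-- The support-based Minimax score of `a`: the maximum of `Support P b a`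
over all `b` with a positive margin over `a` (`0` if there is no such `b`). -/
def SupportMMScore (P : Profile α) (a : α) : ℕ :=
  WithBot.unbotD 0 ((((P.alts.erase a).filter fun b => 0 < Margin P b a).image fun b =>
    Support P b a).max)

/-- Support-based Minimax: alternatives with minimal support-based Minimax score. -/
def SupportMinimax (P : Profile α) : Finset α :=
  P.alts.filter fun a => ∀ b ∈ P.alts, SupportMMScore P a ≤ SupportMMScore P b

/-- The set of weak Condorcet winners in `P`. -/
def WeakCondorcetWinners (P : Profile α) : Finset α :=
  P.alts.filter fun a => ∀ x ∈ P.alts, 0 ≤ Margin P a x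

/-- The plurality score of `a`: the number of voters ranking `a` uniquely first. -/
def PluralityScore (P : Profile α) (a : α) : ℕ :=
  (P.voters.filter fun i => ∀ b ∈ P.alts, b ≠ a → P.rel i a b = true).card

/-- The Condorcet-Plurality voting method: the weak Condorcet winners if there
are any; otherwise the alternatives with maximal plurality score. -/
def CP (P : Profile α) : Finset α :=
  if (WeakCondorcetWinners P).Nonempty then WeakCondorcetWinners P
  else P.alts.filter fun a => ∀ b ∈ P.alts, PluralityScore P b ≤ PluralityScore P a

/-- The marginal Borda score of `a`: the sum of the margins of `a` over the
alternatives. -/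
def MarginalBorda (P : Profile α) (a : α) : ℤ :=
  ∑ b ∈ P.alts, Margin P a b

/-- Minimax MB: the Minimax winners with greatest marginal Borda score. -/
def MinimaxMB (P : Profile α) : Finset α :=
  (Minimax P).filter fun a => ∀ b ∈ Minimax P, MarginalBorda P b ≤ MarginalBorda P a

/-- `P` and `P'` have the same ordinal margin graph. -/
def SameOrdinalMarginGraph (P P' : Profile α) : Prop :=
  P.alts = P'.alts ∧
  (∀ a ∈ P.alts, ∀ b ∈ P.alts, (0 < Margin P a b ↔ 0 < Margin P' a b)) ∧
  (∀ a ∈ P.alts, ∀ b ∈ P.alts, ∀ c ∈ P.alts, ∀ d ∈ P.alts,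
    (Margin P c d ≤ Margin P a b ↔ Margin P' c d ≤ Margin P' a b))

/-- Ordinal margin invariance relative to a domain `D` of profiles. -/
def OrdinalMarginInvariance (D : Set (Profile α)) (F : Profile α → Finset α) : Prop :=
  ∀ P ∈ D, ∀ P' ∈ D, SameOrdinalMarginGraph P P' → F P = F P'

/-- `P` is uniquely-weighted: distinct pairs of distinct alternatives have
distinct margins. -/
def UniquelyWeighted (P : Profile α) : Prop :=
  ∀ a ∈ P.alts, ∀ b ∈ P.alts, ∀ c ∈ P.alts, ∀ d ∈ P.alts,
    a ≠ b → c ≠ d → (a, b) ≠ (c, d) → Margin P a b ≠ Margin P c d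

/-!
Restricted to two alternatives, a Minimax winner cannot lose the head-to-head comparison. Applied
to `P|{a, b}` and to `P_{-b} = P|{a, c}`, and with no zero margins, this makes `a` beat both `b`
and `c`: `a` is the Condorcet winner of `P`, which Minimax, and hence Minimax MB, elects alone.
-/

omit [DecidableEq α] in
theorem margin_swap (P : Profile α) (x y : α) : Margin P y x = -Margin P x y := by
  unfold Margin; ring

theorem margin_restrict (P : Profile α) {Y : Finset α} {x y : α} (hx : x ∈ Y) (hy : y ∈ Y) :
    Margin (P.restrict Y) x y = Margin P x y := by
  simp [Margin, Profile.restrict, hx, hy]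

theorem mmscore_eq_max' (P : Profile α) {x : α} (hne : (P.alts.erase x).Nonempty) :
    MMScore P x = ((P.alts.erase x).image fun y => Margin P y x).max' (hne.image _) := by
  rw [MMScore, ← Finset.coe_max', WithBot.unbotD_coe]

theorem margin_le_mmscore (P : Profile α) {x y : α} (hy : y ∈ P.alts.erase x) :
    Margin P y x ≤ MMScore P x := by
  rw [mmscore_eq_max' P ⟨y, hy⟩]
  exact Finset.le_max' _ _ (Finset.mem_image_of_mem (fun z => Margin P z x) hy)

theorem mmscore_le (P : Profile α) {x : α} {m : ℤ} (hne : (P.alts.erase x).Nonempty)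
    (h : ∀ y ∈ P.alts.erase x, Margin P y x ≤ m) : MMScore P x ≤ m := by
  rw [mmscore_eq_max' P hne]
  exact Finset.max'_le _ _ _ (Finset.forall_mem_image.mpr h)

theorem margin_nonneg_of_mem_minimax_of_alts_eq_pair {P : Profile α} {x y : α} (hxy : x ≠ y)
    (halts : P.alts = {x, y}) (hx : x ∈ Minimax P) : 0 ≤ Margin P x y := by
  have hy : y ∈ P.alts.erase x := by simp [halts, hxy.symm]
  have hx' : x ∈ P.alts.erase y := by simp [halts, hxy]
  have hyx : ∀ z ∈ P.alts.erase y, Margin P z y ≤ Margin P x y := by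
    intro z hz
    obtain rfl : z = x := by
      simp only [halts, Finset.mem_erase, Finset.mem_insert, Finset.mem_singleton] at hz
      tauto
    rfl
  have := calc
    Margin P y x ≤ MMScore P x := margin_le_mmscore P hy
    _ ≤ MMScore P y := (Finset.mem_filter.mp hx).2 y (Finset.mem_of_mem_erase hy)
    _ ≤ Margin P x y := mmscore_le P ⟨x, hx'⟩ hyx
  rw [margin_swap] at this
  omega

theorem margin_pos_of_mem_minimax_restrict_pair {P : Profile α} {x y : α} (hxy : x ≠ y)
    (hnz : Margin P x y ≠ 0) (hx : x ∈ Minimax (P.restrict {x, y})) : 0 < Margin P x y := by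
  have hnonneg := margin_nonneg_of_mem_minimax_of_alts_eq_pair hxy rfl hx
  rw [margin_restrict P (by simp) (by simp)] at hnonneg
  exact lt_of_le_of_ne hnonneg hnz.symm

theorem minimax_eq_singleton_of_condorcet {P : Profile α} {x : α} (hx : x ∈ P.alts)
    (hwin : ∀ y ∈ P.alts, y ≠ x → 0 < Margin P x y) : Minimax P = {x} := by
  have hbeats : ∀ y ∈ P.alts, y ≠ x → MMScore P x < MMScore P y := by
    intro y hy hyx
    have hneg : MMScore P x ≤ 0 := by
      refine mmscore_le P ⟨y, Finset.mem_erase.mpr ⟨hyx, hy⟩⟩ fun z hz => ?_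
      have := hwin z (Finset.mem_of_mem_erase hz) (Finset.ne_of_mem_erase hz)
      rw [margin_swap]
      omega
    have := margin_le_mmscore P (Finset.mem_erase.mpr ⟨hyx.symm, hx⟩)
    linarith [hwin y hy hyx]
  ext z
  simp only [Minimax, Finset.mem_filter, Finset.mem_singleton]
  constructor
  · rintro ⟨hz, hmin⟩
    by_contra hzx
    exact (hmin x hx).not_gt (hbeats z hz hzx)
  · rintro rfl
    refine ⟨hx, fun y hy => ?_⟩
    rcases eq_or_ne y z with rfl | hyz
    · rfl
    · exact (hbeats y hy hyz).le

theorem minimaxMB_condorcetConsistent (D : Set (Profile α)) : CondorcetConsistent D MinimaxMB := by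
  intro P _ x hx hwin
  rw [MinimaxMB, minimax_eq_singleton_of_condorcet hx hwin]
  simp

theorem minimaxMB_immunity_no_zero_margins_general {α : Type*} [DecidableEq α] :
    ∀ P : Profile α, IsSWO P → P.voters.Nonempty → P.alts.card = 3 →
      (∀ x ∈ P.alts, ∀ y ∈ P.alts, x ≠ y → Margin P x y ≠ 0) →
      ∀ a ∈ P.alts, ∀ b ∈ P.alts,
        a ∈ MinimaxMB (P.minus b) → MinimaxMB (P.restrict {a, b}) = {a} →
        a ∈ MinimaxMB P := by
  intro P _ _ hcard hnz a ha b hb hminus hpair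
  have haP : a ∈ P.alts.erase b := Finset.filter_subset _ _ (Finset.filter_subset _ _ hminus)
  have hab : a ≠ b := Finset.ne_of_mem_erase haP
  obtain ⟨c, hc⟩ : ∃ c, (P.alts.erase b).erase a = {c} := by
    rw [← Finset.card_eq_one, Finset.card_erase_of_mem haP, Finset.card_erase_of_mem hb, hcard]
  obtain ⟨hca, hcb⟩ := Finset.mem_erase.mp (hc ▸ Finset.mem_singleton_self c)
  have hminus_eq : P.minus b = P.restrict {a, c} := by
    rw [Profile.minus, ← hc, Finset.insert_erase haP]
  have hab_pos : 0 < Margin P a b := margin_pos_of_mem_minimax_restrict_pair hab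
    (hnz a ha b hb hab) (Finset.filter_subset _ _ (hpair ▸ Finset.mem_singleton_self a))
  have hac_pos : 0 < Margin P a c := margin_pos_of_mem_minimax_restrict_pair hca.symm
    (hnz a ha c (Finset.mem_of_mem_erase hcb) hca.symm)
    (Finset.filter_subset _ _ (hminus_eq ▸ hminus))
  rw [minimaxMB_condorcetConsistent Set.univ P trivial a ha fun y hy hya => ?_]
  · exact Finset.mem_singleton_self a
  rcases eq_or_ne y b with rfl | hyb
  · exact hab_pos
  · have hyc : y ∈ (P.alts.erase b).erase a := by simp [hya, hyb, hy]
    rw [hc, Finset.mem_singleton] at hyc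
    exact hyc ▸ hac_pos

/-- Minimax MB satisfies immunity to spoilers on three-alternative profiles
with no zero margins between distinct alternatives. -/
theorem minimaxMB_immunity_no_zero_margins {α : Type*} [DecidableEq α]
    (hX : ∃ x y z : α, x ≠ y ∧ x ≠ z ∧ y ≠ z) :
    ∀ P : Profile α, IsSWO P → P.voters.Nonempty → P.alts.card = 3 →
      (∀ x ∈ P.alts, ∀ y ∈ P.alts, x ≠ y → Margin P x y ≠ 0) →
      ∀ a ∈ P.alts, ∀ b ∈ P.alts,
        a ∈ MinimaxMB (P.minus b) → MinimaxMB (P.restrict {a, b}) = {a} →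
        a ∈ MinimaxMB P :=
  minimaxMB_immunity_no_zero_margins_general

end MayMinimax
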